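/- The explicit values of the edge degree deg(λ →ᵢ μ) := #{μ' < μ in Bruhat order with λ →ᵢ μ'} − #{λ' > λ with λ' →ᵢ μ} for the eight local moves ∨∘→∘∨, ∧∘→∘∧, ×∨→∨×, ×∧→∧×, ×∘→∨∧, ×∘→∧∨, ∨∧→∘×, ∧∨→∘× are respectively 0, 0, 0, 0, 0, 1, −1, 0. -/

import Mathlib

/-- Labels of the vertices of a weight diagram. -/
inductive WLabel : Type
  | o | up | down | x
deriving DecidableEq

/-- A weight diagram: a labelling of ℤ which is `∧` far to the left and `∨`
far to the right. -/
def IsWeightDiagram (w : ℤ → WLabel) : Prop :=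
  ∃ a b : ℤ, (∀ i : ℤ, i < a → w i = .up) ∧ (∀ i : ℤ, b < i → w i = .down)

/-- One generating move of the Bruhat order: swap a `∨` at `p` with an `∧` at
`q > p` (so `∨`'s move to the right, i.e. the weight gets bigger). -/
def BruhatStep (w w' : ℤ → WLabel) : Prop :=
  ∃ p q : ℤ, p < q ∧ w p = .down ∧ w q = .up ∧ w' p = .up ∧ w' q = .down ∧
    ∀ x : ℤ, x ≠ p → x ≠ q → w' x = w x

/-- The Bruhat order on weight diagrams. -/
def BruhatLE : (ℤ → WLabel) → (ℤ → WLabel) → Prop := Relation.ReflTransGen BruhatStep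

def BruhatLT (w w' : ℤ → WLabel) : Prop := BruhatLE w w' ∧ w ≠ w'

/-- The eight allowed local configurations of the labels of `λ` and `μ` at the
vertices `i`, `i+1` for an edge `λ →ᵢ μ`. -/
def EPattern : WLabel × WLabel → WLabel × WLabel → Prop := fun a b =>
  (a = (.down, .o) ∧ b = (.o, .down)) ∨
  (a = (.up, .o) ∧ b = (.o, .up)) ∨
  (a = (.x, .down) ∧ b = (.down, .x)) ∨
  (a = (.x, .up) ∧ b = (.up, .x)) ∨
  (a = (.x, .o) ∧ b = (.down, .up)) ∨
  (a = (.x, .o) ∧ b = (.up, .down)) ∨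
  (a = (.down, .up) ∧ b = (.o, .x)) ∨
  (a = (.up, .down) ∧ b = (.o, .x))

/-- The edge relation `λ →ᵢ μ`: the weights agree outside vertices `i`, `i+1`,
where the labels change by one of the eight allowed moves. -/
def ERel (i : ℤ) (l m : ℤ → WLabel) : Prop :=
  (∀ j : ℤ, j ≠ i → j ≠ i + 1 → m j = l j) ∧
  EPattern (l i, l (i + 1)) (m i, m (i + 1))

/-- The edge degree
`deg(λ →ᵢ μ) = #{μ' < μ : λ →ᵢ μ'} − #{λ' > λ : λ' →ᵢ μ}`. -/
noncomputable def edgeDegree (i : ℤ) (l m : ℤ → WLabel) : ℤ :=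
  (Nat.card {m' : ℤ → WLabel // ERel i l m' ∧ BruhatLT m' m} : ℤ)
    - (Nat.card {l' : ℤ → WLabel // ERel i l' m ∧ BruhatLT l l'} : ℤ)

/-!
An edge `λ →ᵢ μ` only changes the labels at `i, i+1`, so an edge out of `λ` (or into `μ`) is
determined by its local pattern. When the pattern of `λ` has a single possible target (resp. the
pattern of `μ` a single possible source), the only candidate in the count is `μ` (resp. `λ`)
itself, which is excluded, and the count vanishes. This leaves the lower count for `×∘` and the
upper count for `∘×`: there the two candidate patterns `∨∧` and `∧∨` differ by swapping `i` and
`i+1`, which is a Bruhat step from `∨∧` up to `∧∨`. The candidate that would need this step to be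
undone is excluded because, on weight diagrams, the number of `∨`'s at positions `≤ p` strictly
drops along a step starting at `p` and never increases along the Bruhat order.
-/
open Equiv

instance : Fintype WLabel :=
  ⟨{.o, .up, .down, .x}, fun a => by cases a <;> decide⟩

instance : DecidableRel EPattern := fun _ _ =>
  inferInstanceAs (Decidable (_ ∨ _ ∨ _ ∨ _ ∨ _ ∨ _ ∨ _ ∨ _))

section Bruhat

variable {w w' : ℤ → WLabel} {p q : ℤ}

lemma IsWeightDiagram.comp_swap (hw : IsWeightDiagram w) (p q : ℤ) :
    IsWeightDiagram (w ∘ swap p q) := by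
  obtain ⟨a, b, ha, hb⟩ := hw
  refine ⟨min a (min p q), max b (max p q), fun j hj => ?_, fun j hj => ?_⟩
  · rw [Function.comp_apply, swap_apply_of_ne_of_ne (by omega) (by omega)]
    exact ha j (by omega)
  · rw [Function.comp_apply, swap_apply_of_ne_of_ne (by omega) (by omega)]
    exact hb j (by omega)

lemma comp_swap_comp_swap (w : ℤ → WLabel) (p q : ℤ) : (w ∘ swap p q) ∘ swap p q = w :=
  funext fun _ => by simp

lemma BruhatStep.exists_eq_comp_swap (hs : BruhatStep w w') :
    ∃ p q, p < q ∧ w p = .down ∧ w q = .up ∧ w' = w ∘ swap p q := by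
  obtain ⟨p, q, hpq, hp, hq, hp', hq', hoff⟩ := hs
  refine ⟨p, q, hpq, hp, hq, funext fun j => ?_⟩
  rcases eq_or_ne j p with rfl | hjp
  · simp [hp', hq]
  rcases eq_or_ne j q with rfl | hjq
  · simp [hq', hp]
  · simp [hoff j hjp hjq, swap_apply_of_ne_of_ne hjp hjq]

lemma bruhatStep_comp_swap (hpq : p < q) (hp : w p = .down) (hq : w q = .up) :
    BruhatStep w (w ∘ swap p q) :=
  ⟨p, q, hpq, hp, hq, by simp [hq], by simp [hp],
    fun _ hjp hjq => by simp [swap_apply_of_ne_of_ne hjp hjq]⟩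

lemma bruhatLT_comp_swap (hpq : p < q) (hp : w p = .down) (hq : w q = .up) :
    BruhatLT w (w ∘ swap p q) := by
  refine ⟨.single (bruhatStep_comp_swap hpq hp hq), fun he => ?_⟩
  have := congrFun he p
  simp [hp, hq] at this

lemma BruhatLE.isWeightDiagram (h : BruhatLE w w') (hw : IsWeightDiagram w) :
    IsWeightDiagram w' := by
  induction h with
  | refl => exact hw
  | tail _ hs ih =>
    obtain ⟨p, q, -, -, -, rfl⟩ := hs.exists_eq_comp_swap
    exact ih.comp_swap p q

def downsLE (w : ℤ → WLabel) (t : ℤ) : Set ℤ := {j | j ≤ t ∧ w j = .down}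

lemma IsWeightDiagram.finite_downsLE (hw : IsWeightDiagram w) (t : ℤ) :
    (downsLE w t).Finite := by
  obtain ⟨a, -, ha, -⟩ := hw
  refine (Set.finite_Icc a t).subset fun j ⟨hjt, hj⟩ => ⟨?_, hjt⟩
  by_contra hja
  simp [ha j (by omega)] at hj

lemma mapsTo_swap_downsLE (hpq : p < q) (hq : w q = .up) (t : ℤ) :
    Set.MapsTo (swap p q) (downsLE (w ∘ swap p q) t) (downsLE w t) := by
  rintro j ⟨hjt, hj⟩
  refine ⟨?_, hj⟩
  rcases eq_or_ne j p with rfl | hjp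
  · simp [hq] at hj
  rcases eq_or_ne j q with rfl | hjq
  · simpa using hpq.le.trans hjt
  · simpa [swap_apply_of_ne_of_ne hjp hjq] using hjt

lemma ncard_downsLE_comp_swap_le (hw : IsWeightDiagram w) (hpq : p < q) (hq : w q = .up)
    (t : ℤ) : (downsLE (w ∘ swap p q) t).ncard ≤ (downsLE w t).ncard :=
  Set.ncard_le_ncard_of_injOn _ (mapsTo_swap_downsLE hpq hq t) (swap p q).injective.injOn
    (hw.finite_downsLE t)

lemma ncard_downsLE_comp_swap_lt (hw : IsWeightDiagram w) (hpq : p < q) (hp : w p = .down)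
    (hq : w q = .up) : (downsLE (w ∘ swap p q) p).ncard < (downsLE w p).ncard := by
  -- `p` is a `∨` of `w` left of `p`, but its only preimage `q` lies right of `p`
  have hp_notin : p ∉ swap p q '' downsLE (w ∘ swap p q) p := by
    rintro ⟨j, ⟨hjp, -⟩, hj⟩
    rw [swap_apply_eq_iff, swap_apply_left] at hj
    omega
  rw [← Set.ncard_image_of_injective _ (swap p q).injective]
  exact Set.ncard_lt_ncard ((Set.ssubset_iff_of_subset
    (mapsTo_swap_downsLE hpq hq p).image_subset).2 ⟨p, ⟨le_rfl, hp⟩, hp_notin⟩)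
    (hw.finite_downsLE p)

lemma BruhatLE.ncard_downsLE_le (h : BruhatLE w w') (hw : IsWeightDiagram w) (t : ℤ) :
    (downsLE w' t).ncard ≤ (downsLE w t).ncard := by
  induction h with
  | refl => exact le_rfl
  | @tail u _ hwu hs ih =>
    obtain ⟨p, q, hpq, -, hq, rfl⟩ := hs.exists_eq_comp_swap
    exact (ncard_downsLE_comp_swap_le (BruhatLE.isWeightDiagram hwu hw) hpq hq t).trans ih

lemma not_bruhatLE_comp_swap (hw : IsWeightDiagram w) (hpq : p < q) (hp : w p = .down)
    (hq : w q = .up) : ¬ BruhatLE (w ∘ swap p q) w := fun h =>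
  (h.ncard_downsLE_le (hw.comp_swap p q) p).not_gt (ncard_downsLE_comp_swap_lt hw hpq hp hq)

end Bruhat

section Edges

variable {i : ℤ} {l m l' m' : ℤ → WLabel}

lemma eq_of_eqOn_pair_compl {f g : ℤ → WLabel} (hoff : ∀ j, j ≠ i → j ≠ i + 1 → f j = g j)
    (hpair : (f i, f (i + 1)) = (g i, g (i + 1))) : f = g := by
  simp only [Prod.mk.injEq] at hpair
  funext j
  rcases eq_or_ne j i with rfl | hj
  · exact hpair.1
  rcases eq_or_ne j (i + 1) with rfl | hj1
  · exact hpair.2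
  · exact hoff j hj hj1

lemma ERel.eq_of_pair_eq_right (h : ERel i l m) (h' : ERel i l m')
    (hpair : (m' i, m' (i + 1)) = (m i, m (i + 1))) : m' = m :=
  eq_of_eqOn_pair_compl (fun j hj hj1 => (h'.1 j hj hj1).trans (h.1 j hj hj1).symm) hpair

lemma ERel.eq_of_pair_eq_left (h : ERel i l m) (h' : ERel i l' m)
    (hpair : (l' i, l' (i + 1)) = (l i, l (i + 1))) : l' = l :=
  eq_of_eqOn_pair_compl (fun j hj hj1 => (h'.1 j hj hj1).symm.trans (h.1 j hj hj1)) hpair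

lemma pair_comp_swap (w : ℤ → WLabel) (i : ℤ) :
    ((w ∘ swap i (i + 1)) i, (w ∘ swap i (i + 1)) (i + 1)) = (w (i + 1), w i) := by
  simp

lemma comp_swap_eq_of_ne {w : ℤ → WLabel} {j : ℤ} (hj : j ≠ i) (hj1 : j ≠ i + 1) :
    (w ∘ swap i (i + 1)) j = w j := by
  simp [swap_apply_of_ne_of_ne hj hj1]

lemma ERel.eq_comp_swap_right (h : ERel i l m) (h' : ERel i l m')
    (hpair : (m' i, m' (i + 1)) = (m (i + 1), m i)) : m' = m ∘ swap i (i + 1) :=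
  eq_of_eqOn_pair_compl
    (fun j hj hj1 =>
      (h'.1 j hj hj1).trans ((h.1 j hj hj1).symm.trans (comp_swap_eq_of_ne hj hj1).symm))
    (hpair.trans (pair_comp_swap m i).symm)

lemma ERel.eq_comp_swap_left (h : ERel i l m) (h' : ERel i l' m)
    (hpair : (l' i, l' (i + 1)) = (l (i + 1), l i)) : l' = l ∘ swap i (i + 1) :=
  eq_of_eqOn_pair_compl
    (fun j hj hj1 =>
      (h'.1 j hj hj1).symm.trans ((h.1 j hj hj1).trans (comp_swap_eq_of_ne hj hj1).symm))
    (hpair.trans (pair_comp_swap l i).symm)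

lemma card_lower_eq_zero_of_unique_target (h : ERel i l m)
    (huniq : ∀ b, EPattern (l i, l (i + 1)) b → b = (m i, m (i + 1))) :
    Nat.card {m' // ERel i l m' ∧ BruhatLT m' m} = 0 :=
  Nat.card_eq_zero.2 <| .inl <| (isEmpty_subtype _).2 fun _ ⟨h', hlt⟩ =>
    hlt.2 (h.eq_of_pair_eq_right h' (huniq _ h'.2))

lemma card_upper_eq_zero_of_unique_source (h : ERel i l m)
    (huniq : ∀ a, EPattern a (m i, m (i + 1)) → a = (l i, l (i + 1))) :
    Nat.card {l' // ERel i l' m ∧ BruhatLT l l'} = 0 :=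
  Nat.card_eq_zero.2 <| .inl <| (isEmpty_subtype _).2 fun _ ⟨h', hlt⟩ =>
    hlt.2 (h.eq_of_pair_eq_left h' (huniq _ h'.2)).symm

lemma EPattern.eq_of_fst_eq_xo {b : WLabel × WLabel} (hb : EPattern (.x, .o) b) :
    b = (.down, .up) ∨ b = (.up, .down) := by
  revert b; decide

lemma EPattern.eq_of_snd_eq_ox {a : WLabel × WLabel} (ha : EPattern a (.o, .x)) :
    a = (.down, .up) ∨ a = (.up, .down) := by
  revert a; decide

lemma EPattern.snd_eq_ox {a b : WLabel × WLabel} (ha : a = (.down, .up) ∨ a = (.up, .down))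
    (h : EPattern a b) : b = (.o, .x) := by
  rcases ha with rfl | rfl <;> revert b <;> decide

end Edges

section Degrees

variable {i : ℤ} {l m : ℤ → WLabel}

lemma edgeDegree_eq_zero_of_rigid {a b : WLabel × WLabel} (h : ERel i l m)
    (hl : (l i, l (i + 1)) = a) (htarget : ∀ b', EPattern a b' → b' = b)
    (hsource : ∀ a', EPattern a' b → a' = a) : edgeDegree i l m = 0 := by
  have hm : (m i, m (i + 1)) = b := htarget _ (hl ▸ h.2)
  rw [edgeDegree, card_lower_eq_zero_of_unique_target h (hl ▸ hm ▸ htarget),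
    card_upper_eq_zero_of_unique_source h (hl ▸ hm ▸ hsource)]
  rfl

lemma edgeDegree_of_xo_downUp (hmw : IsWeightDiagram m) (h : ERel i l m)
    (hl : (l i, l (i + 1)) = (.x, .o)) (hm : (m i, m (i + 1)) = (.down, .up)) :
    edgeDegree i l m = 0 := by
  have hlower : Nat.card {m' // ERel i l m' ∧ BruhatLT m' m} = 0 := by
    refine Nat.card_eq_zero.2 <| .inl <| (isEmpty_subtype _).2 fun m' ⟨h', hlt⟩ => ?_
    simp only [Prod.mk.injEq] at hm
    rcases (hl ▸ h'.2 : EPattern _ _).eq_of_fst_eq_xo with hm' | hm'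
    · exact hlt.2 (h.eq_of_pair_eq_right h' (hm'.trans (by rw [hm.1, hm.2])))
    · rw [h.eq_comp_swap_right h' (hm'.trans (by rw [hm.1, hm.2]))] at hlt
      exact not_bruhatLE_comp_swap hmw (lt_add_one i) hm.1 hm.2 hlt.1
  rw [edgeDegree, hlower, card_upper_eq_zero_of_unique_source h (hl ▸ hm ▸ by decide)]
  rfl

lemma edgeDegree_of_xo_upDown (h : ERel i l m)
    (hl : (l i, l (i + 1)) = (.x, .o)) (hm : (m i, m (i + 1)) = (.up, .down)) :
    edgeDegree i l m = 1 := by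
  simp only [Prod.mk.injEq] at hm
  set m₀ := m ∘ swap i (i + 1)
  have hm₀ : (m₀ i, m₀ (i + 1)) = (.down, .up) := by rw [pair_comp_swap, hm.1, hm.2]
  have h₀ : ERel i l m₀ :=
    ⟨fun j hj hj1 => (comp_swap_eq_of_ne hj hj1).trans (h.1 j hj hj1), by rw [hl, hm₀]; decide⟩
  have hlt₀ : BruhatLT m₀ m := by
    simpa only [m₀, comp_swap_comp_swap] using
      bruhatLT_comp_swap (w := m₀) (lt_add_one i) (by simp [m₀, hm.2]) (by simp [m₀, hm.1])
  have hlower : Nat.card {m' // ERel i l m' ∧ BruhatLT m' m} = 1 := by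
    refine Nat.card_eq_one_iff_exists.2 ⟨⟨m₀, h₀, hlt₀⟩, fun ⟨m', h', hlt⟩ => Subtype.ext ?_⟩
    rcases (hl ▸ h'.2 : EPattern _ _).eq_of_fst_eq_xo with hm' | hm'
    · exact h₀.eq_of_pair_eq_right h' (hm'.trans hm₀.symm)
    · exact absurd (h.eq_of_pair_eq_right h' (hm'.trans (by rw [hm.1, hm.2]))) hlt.2
  rw [edgeDegree, hlower,
    card_upper_eq_zero_of_unique_source h (by rw [hl, hm.1, hm.2]; decide)]
  rfl

lemma edgeDegree_of_downUp_ox (h : ERel i l m)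
    (hl : (l i, l (i + 1)) = (.down, .up)) : edgeDegree i l m = -1 := by
  have hm : (m i, m (i + 1)) = (.o, .x) := EPattern.snd_eq_ox (.inl hl) h.2
  simp only [Prod.mk.injEq] at hl
  set l₀ := l ∘ swap i (i + 1)
  have hl₀ : (l₀ i, l₀ (i + 1)) = (.up, .down) := by rw [pair_comp_swap, hl.1, hl.2]
  have h₀ : ERel i l₀ m :=
    ⟨fun j hj hj1 => (h.1 j hj hj1).trans (comp_swap_eq_of_ne hj hj1).symm,
      by rw [hl₀, hm]; decide⟩
  have hupper : Nat.card {l' // ERel i l' m ∧ BruhatLT l l'} = 1 := by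
    refine Nat.card_eq_one_iff_exists.2
      ⟨⟨l₀, h₀, bruhatLT_comp_swap (lt_add_one i) hl.1 hl.2⟩, fun ⟨l', h', hlt⟩ => Subtype.ext ?_⟩
    rcases (hm ▸ h'.2 : EPattern _ _).eq_of_snd_eq_ox with hl' | hl'
    · exact absurd (h.eq_of_pair_eq_left h' (hl'.trans (by rw [hl.1, hl.2]))).symm hlt.2
    · exact h₀.eq_of_pair_eq_left h' (hl'.trans hl₀.symm)
  rw [edgeDegree, hupper,
    card_lower_eq_zero_of_unique_target h (by rw [hl.1, hl.2, hm]; decide)]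
  rfl

lemma edgeDegree_of_upDown_ox (hlw : IsWeightDiagram l) (h : ERel i l m)
    (hl : (l i, l (i + 1)) = (.up, .down)) : edgeDegree i l m = 0 := by
  have hm : (m i, m (i + 1)) = (.o, .x) := EPattern.snd_eq_ox (.inr hl) h.2
  have hupper : Nat.card {l' // ERel i l' m ∧ BruhatLT l l'} = 0 := by
    refine Nat.card_eq_zero.2 <| .inl <| (isEmpty_subtype _).2 fun l' ⟨h', hlt⟩ => ?_
    simp only [Prod.mk.injEq] at hl
    rcases (hm ▸ h'.2 : EPattern _ _).eq_of_snd_eq_ox with hl' | hl'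
    · rw [h.eq_comp_swap_left h' (hl'.trans (by rw [hl.1, hl.2]))] at hlt
      refine not_bruhatLE_comp_swap (hlw.comp_swap i (i + 1)) (lt_add_one i)
        (by simp [hl.2]) (by simp [hl.1]) ?_
      simpa only [comp_swap_comp_swap] using hlt.1
    · exact hlt.2 (h.eq_of_pair_eq_left h' (hl'.trans (by rw [hl.1, hl.2]))).symm
  rw [edgeDegree, hupper, card_lower_eq_zero_of_unique_target h (hl ▸ hm ▸ by decide)]
  rfl

end Degrees

/-- the explicit values of the edge degrees for the eight local
moves `∨∘→∘∨`, `∧∘→∘∧`, `×∨→∨×`, `×∧→∧×`, `×∘→∨∧`, `×∘→∧∨`, `∨∧→∘×`,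
`∧∨→∘×` are respectively `0, 0, 0, 0, 0, 1, −1, 0`. -/
theorem edgeDegree_values (i : ℤ) (l m : ℤ → WLabel)
    (hl : IsWeightDiagram l) (hm : IsWeightDiagram m) (h : ERel i l m) :
    ((l i, l (i + 1)) = (.down, .o) → edgeDegree i l m = 0) ∧
    ((l i, l (i + 1)) = (.up, .o) → edgeDegree i l m = 0) ∧
    ((l i, l (i + 1)) = (.x, .down) → edgeDegree i l m = 0) ∧
    ((l i, l (i + 1)) = (.x, .up) → edgeDegree i l m = 0) ∧
    ((l i, l (i + 1)) = (.x, .o) → (m i, m (i + 1)) = (.down, .up) →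
      edgeDegree i l m = 0) ∧
    ((l i, l (i + 1)) = (.x, .o) → (m i, m (i + 1)) = (.up, .down) →
      edgeDegree i l m = 1) ∧
    ((l i, l (i + 1)) = (.down, .up) → edgeDegree i l m = -1) ∧
    ((l i, l (i + 1)) = (.up, .down) → edgeDegree i l m = 0) := by
  refine ⟨fun hc => edgeDegree_eq_zero_of_rigid (b := (.o, .down)) h hc (by decide) (by decide),
    fun hc => edgeDegree_eq_zero_of_rigid (b := (.o, .up)) h hc (by decide) (by decide),
    fun hc => edgeDegree_eq_zero_of_rigid (b := (.down, .x)) h hc (by decide) (by decide),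
    fun hc => edgeDegree_eq_zero_of_rigid (b := (.up, .x)) h hc (by decide) (by decide),
    edgeDegree_of_xo_downUp hm h, edgeDegree_of_xo_upDown h,
    edgeDegree_of_downUp_ox h, edgeDegree_of_upDown_ox hl h⟩
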